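/- arXiv:2304.10898 — 6 statements merged into one kernel-verified Lean document; each statement's English description precedes it below -/
import Mathlib

section
/- Let S ⊆ ℝⁿ be an open convex set, let f : ℝⁿ → ℝ be differentiable and convex on S, and let g : ℝⁿ → ℝ be an affine function that is strictly positive on S. Then the ratio z(x) = f(x)/g(x) is pseudoconvex on S, i.e., for all x, x' ∈ S, ⟨∇z(x), x' − x⟩ ≥ 0 implies z(x') ≥ z(x). -/
/-!
Write `v = x' - x`. Since `g` is affine, `g x' = g x + L v`, and the quotient rule gives
`g(x)² · ∂ᵥz(x) = g(x) · ∂ᵥf(x) - f(x) · L v`. If this is nonnegative, the gradient inequality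
`∂ᵥf(x) ≤ f(x') - f(x)` of the convex function `f` yields
`f(x) g(x') = f(x) g(x) + f(x) L v ≤ f(x) g(x) + g(x) (f(x') - f(x)) = f(x') g(x)`.
-/

open AffineMap in
theorem ConvexOn.fderiv_apply_sub_le {E : Type*} [NormedAddCommGroup E] [NormedSpace ℝ E]
    {S : Set E} {f : E → ℝ} {f' : E →L[ℝ] ℝ} {x y : E} (hf : ConvexOn ℝ S f)
    (hx : x ∈ S) (hy : y ∈ S) (hf' : HasFDerivAt f f' x) :
    f' (y - x) ≤ f y - f x := by
  have hline : HasDerivAt (f ∘ lineMap (k := ℝ) x y) (f' (y - x)) 0 :=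
    (lineMap_apply_zero (k := ℝ) x y ▸ hf').comp_hasDerivAt 0 hasDerivAt_lineMap
  have hslope := (hf.comp_affineMap (lineMap (k := ℝ) x y)).le_slope_of_hasDerivAt
    (by simpa using hx) (by simpa using hy) zero_lt_one hline
  simpa [slope_def_field] using hslope

theorem HasFDerivAt.div {𝕜 E : Type*} [NontriviallyNormedField 𝕜] [NormedAddCommGroup E]
    [NormedSpace 𝕜 E] {c d : E → 𝕜} {c' d' : E →L[𝕜] 𝕜} {x : E}
    (hc : HasFDerivAt c c' x) (hd : HasFDerivAt d d' x) (hx : d x ≠ 0) :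
    HasFDerivAt (fun y => c y / d y) ((d x ^ 2)⁻¹ • (d x • c' - c x • d')) x := by
  have hinv := (hasFDerivAt_inv hx).comp x hd
  have hquot : (fun y => c y / d y) = c * ((·⁻¹) ∘ d) := by
    ext; simp [div_eq_mul_inv]
  rw [hquot]
  refine (hc.mul hinv).congr_fderiv ?_
  ext v
  simp only [Function.comp_apply, add_apply, smul_apply, ContinuousLinearMap.comp_apply,
    ContinuousLinearMap.toSpanSingleton_apply, smul_eq_mul, mul_neg, sub_apply]
  field_simp
  ring

theorem ConvexOn.div_le_div_of_fderiv_div_nonneg {E : Type*} [NormedAddCommGroup E]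
    [NormedSpace ℝ E] {S : Set E} {f : E → ℝ} (hf : ConvexOn ℝ S f) (L : E →L[ℝ] ℝ) (c : ℝ)
    {x y : E} (hx : x ∈ S) (hy : y ∈ S) (hfx : DifferentiableAt ℝ f x)
    (hgx : 0 < L x + c) (hgy : 0 < L y + c)
    (h : 0 ≤ fderiv ℝ (fun z => f z / (L z + c)) x (y - x)) :
    f x / (L x + c) ≤ f y / (L y + c) := by
  set f' := fderiv ℝ f x
  rw [(hfx.hasFDerivAt.div (L.hasFDerivAt.add_const c) hgx.ne').fderiv] at h
  simp only [smul_apply, sub_apply, smul_eq_mul] at h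
  have hcross : f x * L (y - x) ≤ (L x + c) * f' (y - x) :=
    sub_nonneg.mp ((mul_nonneg_iff_of_pos_left (by positivity)).mp h)
  have hgrad := hf.fderiv_apply_sub_le hx hy hfx.hasFDerivAt
  rw [div_le_div_iff₀ hgx hgy]
  calc f x * (L y + c) = f x * (L x + c) + f x * L (y - x) := by rw [map_sub]; ring
    _ ≤ f x * (L x + c) + (L x + c) * f' (y - x) := by gcongr
    _ ≤ f x * (L x + c) + (L x + c) * (f y - f x) := by gcongr
    _ = f y * (L x + c) := by ring

theorem stmt_0_general (n : ℕ) (S : Set (Fin n → ℝ)) (hSopen : IsOpen S)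
    (f g : (Fin n → ℝ) → ℝ)
    (hfdiff : DifferentiableOn ℝ f S) (hfconv : ConvexOn ℝ S f)
    (L : (Fin n → ℝ) →L[ℝ] ℝ) (c : ℝ) (hgaff : ∀ x, g x = L x + c)
    (hgpos : ∀ x ∈ S, 0 < g x) :
    ∀ x ∈ S, ∀ x' ∈ S,
      0 ≤ fderiv ℝ (fun y => f y / g y) x (x' - x) → f x / g x ≤ f x' / g x' := by
  intro x hx x' hx' hderiv
  obtain rfl : g = fun y => L y + c := funext hgaff
  exact hfconv.div_le_div_of_fderiv_div_nonneg L c hx hx'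
    (hfdiff.differentiableAt (hSopen.mem_nhds hx)) (hgpos x hx) (hgpos x' hx') hderiv

/-- Theorem (Cambini & Martein): if `f` is differentiable and convex on an open convex
set `S`, and `g` is affine and strictly positive on `S`, then `z = f / g` is
pseudoconvex on `S`: for all `x, x' ∈ S`, `⟨∇z(x), x' - x⟩ ≥ 0` implies `z(x') ≥ z(x)`. -/
theorem stmt_0 (n : ℕ) (S : Set (Fin n → ℝ)) (hSopen : IsOpen S) (hSconv : Convex ℝ S)
    (f g : (Fin n → ℝ) → ℝ)
    (hfdiff : DifferentiableOn ℝ f S) (hfconv : ConvexOn ℝ S f)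
    (L : (Fin n → ℝ) →L[ℝ] ℝ) (c : ℝ) (hgaff : ∀ x, g x = L x + c)
    (hgpos : ∀ x ∈ S, 0 < g x) :
    ∀ x ∈ S, ∀ x' ∈ S,
      0 ≤ fderiv ℝ (fun y => f y / g y) x (x' - x) → f x / g x ≤ f x' / g x' :=
  stmt_0_general n S hSopen f g hfdiff hfconv L c hgaff hgpos
end

section
/- Let S ⊆ ℝⁿ be an open convex set, let f : ℝⁿ → ℝ be differentiable, convex and nonnegative on S, and let g : ℝⁿ → ℝ be differentiable, concave and strictly positive on S. Then the ratio z(x) = f(x)/g(x) is pseudoconvex on S, i.e., for all x, x' ∈ S, ⟨∇z(x), x' − x⟩ ≥ 0 implies z(x') ≥ z(x). -/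
/-!
Write `v = x' - x`. By the quotient rule, `⟨∇z(x), v⟩ ≥ 0` says `f'(x) v · g x ≥ f x · g'(x) v`.
The gradient inequalities `f'(x) v ≤ f x' - f x` (convexity) and `g'(x) v ≥ g x' - g x`
(concavity), together with `f x ≥ 0` and `g x > 0`, turn this into
`(f x' - f x) g x ≥ f x (g x' - g x)`, i.e. `f x' g x ≥ f x g x'`.
-/

section GradientInequality

variable {E : Type*} [NormedAddCommGroup E] [NormedSpace ℝ E] {S : Set E} {φ : E → ℝ}
  {φ' : E →L[ℝ] ℝ} {x y : E}

lemma hasDerivAt_comp_lineMap_zero (hφ : HasFDerivAt φ φ' x) :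
    HasDerivAt (φ ∘ AffineMap.lineMap (k := ℝ) x y) (φ' (y - x)) 0 := by
  have hφ₀ : HasFDerivAt φ φ' (AffineMap.lineMap x y (0 : ℝ)) := by simpa using hφ
  exact hφ₀.comp_hasDerivAt 0 AffineMap.hasDerivAt_lineMap

lemma ConvexOn.hasFDerivAt_le_sub (hconv : ConvexOn ℝ S φ) (hx : x ∈ S) (hy : y ∈ S)
    (hφ : HasFDerivAt φ φ' x) : φ' (y - x) ≤ φ y - φ x := by
  simpa [slope_def_field] using
    (hconv.comp_affineMap (AffineMap.lineMap x y)).le_slope_of_hasDerivAt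
      (by simpa using hx) (by simpa using hy) one_pos (hasDerivAt_comp_lineMap_zero hφ)

lemma ConcaveOn.sub_le_hasFDerivAt (hconc : ConcaveOn ℝ S φ) (hx : x ∈ S) (hy : y ∈ S)
    (hφ : HasFDerivAt φ φ' x) : φ y - φ x ≤ φ' (y - x) := by
  simpa [slope_def_field] using
    (hconc.comp_affineMap (AffineMap.lineMap x y)).slope_le_of_hasDerivAt
      (by simpa using hx) (by simpa using hy) one_pos (hasDerivAt_comp_lineMap_zero hφ)

end GradientInequality

lemma fderiv_fun_div_apply {𝕜 E : Type*} [NontriviallyNormedField 𝕜] [NormedAddCommGroup E]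
    [NormedSpace 𝕜 E] {f g : E → 𝕜} {x : E} (hf : DifferentiableAt 𝕜 f x)
    (hg : DifferentiableAt 𝕜 g x) (hx : g x ≠ 0) (v : E) :
    fderiv 𝕜 (fun y => f y / g y) x v
      = (fderiv 𝕜 f x v * g x - f x * fderiv 𝕜 g x v) / g x ^ 2 := by
  have hquot := hf.hasFDerivAt.fun_mul ((hasFDerivAt_inv hx).comp x hg.hasFDerivAt)
  simp only [Function.comp_apply, ← div_eq_mul_inv] at hquot
  rw [hquot.fderiv]
  simp only [add_apply, smul_apply, ContinuousLinearMap.comp_apply,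
    ContinuousLinearMap.toSpanSingleton_apply, smul_eq_mul]
  field_simp
  ring

theorem stmt_1_general (n : ℕ) (S : Set (Fin n → ℝ)) (hSopen : IsOpen S)
    (f g : (Fin n → ℝ) → ℝ)
    (hfdiff : DifferentiableOn ℝ f S) (hfconv : ConvexOn ℝ S f)
    (hfnonneg : ∀ x ∈ S, 0 ≤ f x)
    (hgdiff : DifferentiableOn ℝ g S) (hgconc : ConcaveOn ℝ S g)
    (hgpos : ∀ x ∈ S, 0 < g x) :
    ∀ x ∈ S, ∀ x' ∈ S,
      0 ≤ fderiv ℝ (fun y => f y / g y) x (x' - x) → f x / g x ≤ f x' / g x' := by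
  intro x hx x' hx' hgrad
  have hf := hfdiff.differentiableAt (hSopen.mem_nhds hx)
  have hg := hgdiff.differentiableAt (hSopen.mem_nhds hx)
  have hgx := hgpos x hx
  rw [fderiv_fun_div_apply hf hg hgx.ne', le_div_iff₀ (by positivity), zero_mul, sub_nonneg]
    at hgrad
  rw [div_le_div_iff₀ hgx (hgpos x' hx')]
  calc f x * g x' = f x * g x + f x * (g x' - g x) := by ring
    _ ≤ f x * g x + f x * fderiv ℝ g x (x' - x) := by
      gcongr
      · exact hfnonneg x hx
      · exact hgconc.sub_le_hasFDerivAt hx hx' hg.hasFDerivAt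
    _ ≤ f x * g x + fderiv ℝ f x (x' - x) * g x := by gcongr
    _ ≤ f x * g x + (f x' - f x) * g x := by
      gcongr
      exact hfconv.hasFDerivAt_le_sub hx hx' hf.hasFDerivAt
    _ = f x' * g x := by ring

/-- Theorem (Cambini & Martein): if `f` is differentiable, convex and nonnegative on an
open convex set `S`, and `g` is differentiable, concave and strictly positive on `S`,
then `z = f / g` is pseudoconvex on `S`. -/
theorem stmt_1 (n : ℕ) (S : Set (Fin n → ℝ)) (hSopen : IsOpen S) (hSconv : Convex ℝ S)
    (f g : (Fin n → ℝ) → ℝ)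
    (hfdiff : DifferentiableOn ℝ f S) (hfconv : ConvexOn ℝ S f)
    (hfnonneg : ∀ x ∈ S, 0 ≤ f x)
    (hgdiff : DifferentiableOn ℝ g S) (hgconc : ConcaveOn ℝ S g)
    (hgpos : ∀ x ∈ S, 0 < g x) :
    ∀ x ∈ S, ∀ x' ∈ S,
      0 ≤ fderiv ℝ (fun y => f y / g y) x (x' - x) → f x / g x ≤ f x' / g x' :=
  stmt_1_general n S hSopen f g hfdiff hfconv hfnonneg hgdiff hgconc hgpos
end

section
/- Let X ⊆ ℝⁿ, let G ⊆ X × ℝᵐ, let f : ℝⁿ → ℝᵖ and h : ℝⁿ × ℝᵐ → ℝ, let M ∈ ℝᵖ satisfy f(x) ≤ M for all x ∈ X, and set Z = f(X), Z⁺ = Z + ℝ₊ᵖ, Z⋄ = Z⁺ ∩ (M − ℝ₊ᵖ). Define φ(z) = inf{ h(x,y) : (x,y) ∈ G, f(x) ≤ z }. Suppose z̄ ∈ WMin Z⋄ minimizes φ over WMin Z⋄, and suppose (x̄,ȳ) ∈ G with f(x̄) ≤ z̄ attains φ(z̄), i.e., h(x̄,ȳ) = φ(z̄). Then (x̄,ȳ)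 is an optimal solution of the problem min{ h(x,y) : (x,y) ∈ G, f(x) ∈ WMin Z⋄ }, i.e., h(x̄,ȳ) ≤ h(x,y) for every (x,y) ∈ G with f(x) ∈ WMin Z⋄. -/
/-- The set of weakly nondominated points of `Q`. -/
def WMinSet {p : ℕ} (Q : Set (Fin p → ℝ)) : Set (Fin p → ℝ) :=
  {q ∈ Q | ¬ ∃ q' ∈ Q, ∀ i, q' i < q i}

/-- `φ(z) = inf{h(x,y) : (x,y) ∈ G, f(x) ≤ z}`, taken in the extended reals. -/
noncomputable def phi {n m p : ℕ} (G : Set ((Fin n → ℝ) × (Fin m → ℝ)))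
    (f : (Fin n → ℝ) → Fin p → ℝ) (h : (Fin n → ℝ) → (Fin m → ℝ) → ℝ)
    (z : Fin p → ℝ) : EReal :=
  sInf ((fun q => ((h q.1 q.2 : ℝ) : EReal)) '' {q ∈ G | f q.1 ≤ z})

/-- If `z̄` minimizes `φ` over `WMin Z⋄` and `(x̄, ȳ) ∈ G` with `f(x̄) ≤ z̄` attains
`φ(z̄)`, then `(x̄, ȳ)` is optimal for `min{h(x,y) : (x,y) ∈ G, f(x) ∈ WMin Z⋄}`. -/
theorem stmt_13 {n m p : ℕ} (X : Set (Fin n → ℝ))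
    (G : Set ((Fin n → ℝ) × (Fin m → ℝ))) (hGX : ∀ q ∈ G, q.1 ∈ X)
    (f : (Fin n → ℝ) → Fin p → ℝ) (h : (Fin n → ℝ) → (Fin m → ℝ) → ℝ)
    (M : Fin p → ℝ) (hM : ∀ x ∈ X, f x ≤ M)
    (zbar : Fin p → ℝ)
    (hzbarW : zbar ∈ WMinSet ({z | ∃ x ∈ X, f x ≤ z} ∩ {z | z ≤ M}))
    (hzbarMin : ∀ z ∈ WMinSet ({z | ∃ x ∈ X, f x ≤ z} ∩ {z | z ≤ M}),
      phi G f h zbar ≤ phi G f h z)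
    (xbar : Fin n → ℝ) (ybar : Fin m → ℝ)
    (hfeas : (xbar, ybar) ∈ G) (hfle : f xbar ≤ zbar)
    (hattain : ((h xbar ybar : ℝ) : EReal) = phi G f h zbar) :
    ∀ q ∈ G, f q.1 ∈ WMinSet ({z | ∃ x ∈ X, f x ≤ z} ∩ {z | z ≤ M}) →
      h xbar ybar ≤ h q.1 q.2 := by
  intro q hq hW
  have h1 : phi G f h zbar ≤ phi G f h (f q.1) := hzbarMin _ hW
  have h2 : phi G f h (f q.1) ≤ ((h q.1 q.2 : ℝ) : EReal) :=
    sInf_le ⟨q, ⟨hq, le_refl _⟩, rfl⟩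
  have := hattain ▸ (h1.trans h2)
  exact_mod_cast this
end

section
/- Let X ⊆ ℝⁿ, let G ⊆ X × ℝᵐ, let f : ℝⁿ → ℝᵖ and h : ℝⁿ × ℝᵐ → ℝ, let M ∈ ℝᵖ satisfy f(x) ≤ M for all x ∈ X, and set Z = f(X), Z⁺ = Z + ℝ₊ᵖ, Z⋄ = Z⁺ ∩ (M − ℝ₊ᵖ). Define φ(z) = inf{ h(x,y) : (x,y) ∈ G, f(x) ≤ z }. Suppose (x̄,ȳ) is an optimal solution of min{ h(x,y) : (x,y) ∈ G, f(x) ∈ WMin Z⋄ }. Then z̄ := f(x̄) minimizes φ over WMin Z⋄, and φ(z̄) = h(x̄,ȳ). -/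
/-- If `(x̄, ȳ)` is optimal for `min{h(x,y) : (x,y) ∈ G, f(x) ∈ WMin Z⋄}`, then
`z̄ = f(x̄)` minimizes `φ` over `WMin Z⋄` and `φ(z̄) = h(x̄, ȳ)`. -/
theorem stmt_14 {n m p : ℕ} (X : Set (Fin n → ℝ))
    (G : Set ((Fin n → ℝ) × (Fin m → ℝ))) (hGX : ∀ q ∈ G, q.1 ∈ X)
    (f : (Fin n → ℝ) → Fin p → ℝ) (h : (Fin n → ℝ) → (Fin m → ℝ) → ℝ)
    (M : Fin p → ℝ) (hM : ∀ x ∈ X, f x ≤ M)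
    (xbar : Fin n → ℝ) (ybar : Fin m → ℝ)
    (hfeas : (xbar, ybar) ∈ G)
    (hfW : f xbar ∈ WMinSet ({z | ∃ x ∈ X, f x ≤ z} ∩ {z | z ≤ M}))
    (hopt : ∀ q ∈ G, f q.1 ∈ WMinSet ({z | ∃ x ∈ X, f x ≤ z} ∩ {z | z ≤ M}) →
      h xbar ybar ≤ h q.1 q.2) :
    (∀ z ∈ WMinSet ({z | ∃ x ∈ X, f x ≤ z} ∩ {z | z ≤ M}),
        phi G f h (f xbar) ≤ phi G f h z) ∧
      phi G f h (f xbar) = ((h xbar ybar : ℝ) : EReal) := by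
  set S : Set (Fin p → ℝ) := {z | ∃ x ∈ X, f x ≤ z} ∩ {z | z ≤ M} with hS
  -- key: feasible points for φ(z) with z ∈ WMinSet S have f q.1 ∈ WMinSet S
  have key : ∀ z ∈ WMinSet S, ∀ q ∈ G, f q.1 ≤ z → f q.1 ∈ WMinSet S := by
    rintro z ⟨⟨_, hzM⟩, hznd⟩ q hqG hle
    refine ⟨⟨⟨q.1, hGX q hqG, le_refl _⟩, hM q.1 (hGX q hqG)⟩, ?_⟩
    rintro ⟨q', hq'S, hq'lt⟩
    exact hznd ⟨q', hq'S, fun i => lt_of_lt_of_le (hq'lt i) (hle i)⟩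
  -- lower bound for φ(z), z ∈ WMinSet S
  have lb : ∀ z ∈ WMinSet S, ((h xbar ybar : ℝ) : EReal) ≤ phi G f h z := by
    intro z hz
    apply le_sInf
    rintro w ⟨q, ⟨hqG, hqle⟩, rfl⟩
    show ((h xbar ybar : ℝ) : EReal) ≤ ((h q.1 q.2 : ℝ) : EReal)
    exact_mod_cast hopt q hqG (key z hz q hqG hqle)
  have heq : phi G f h (f xbar) = ((h xbar ybar : ℝ) : EReal) := by
    refine le_antisymm ?_ (lb _ hfW)
    exact sInf_le ⟨(xbar, ybar), ⟨hfeas, le_refl _⟩, rfl⟩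
  exact ⟨fun z hz => heq ▸ lb z hz, heq⟩
end

section
/- Let X ⊆ ℝⁿ be nonempty compact, let f = (f₁,…,f_p) : ℝⁿ → ℝᵖ be continuous, let G ⊆ X × ℝᵐ, and let h : ℝⁿ × ℝᵐ → ℝ. Let m, M ∈ ℝᵖ with mⱼ = min{ fⱼ(x) : x ∈ X } for each j and f(x) ≤ M for all x ∈ X, and set Z = f(X). Define φ(z) = inf{ h(x,y) : (x,y) ∈ G, f(x) ≤ z } and zʲ = M − (Mⱼ − mⱼ)eʲ for j = 1,…,p (eʲ the j-th standard basis vector). Suppose (x̄,ȳ) is an optimal solution of min{ h(x,y) : (x,y) ∈ G, f(x) ∈ WMin Z } and there exists an index i with f_i(x̄) = m_i. Then h(x̄,ȳ) = φ(zⁱ), and moreover h(x̄,ȳ) = min{ φ(zʲ) : j = 1,…,p }. -/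
/-- If `(x̄, ȳ)` is optimal for `min{h(x,y) : (x,y) ∈ G, f(x) ∈ WMin Z}` and
`f_i(x̄) = m_i` for some `i`, then `h(x̄, ȳ) = φ(zⁱ)` and moreover
`h(x̄, ȳ) = min_j φ(zʲ)`, where `zʲ = M - (M_j - m_j)eʲ`. -/
theorem stmt_15 {n mm p : ℕ} (X : Set (Fin n → ℝ)) (hXne : X.Nonempty)
    (hXc : IsCompact X)
    (f : (Fin n → ℝ) → Fin p → ℝ) (hf : Continuous f)
    (G : Set ((Fin n → ℝ) × (Fin mm → ℝ))) (hGX : ∀ q ∈ G, q.1 ∈ X)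
    (h : (Fin n → ℝ) → (Fin mm → ℝ) → ℝ)
    (m M : Fin p → ℝ)
    (hm : ∀ j, IsLeast ((fun x => f x j) '' X) (m j))
    (hM : ∀ x ∈ X, f x ≤ M)
    (xbar : Fin n → ℝ) (ybar : Fin mm → ℝ)
    (hfeas : (xbar, ybar) ∈ G)
    (hfW : f xbar ∈ WMinSet (f '' X))
    (hopt : ∀ q ∈ G, f q.1 ∈ WMinSet (f '' X) → h xbar ybar ≤ h q.1 q.2)
    (i : Fin p) (hfi : f xbar i = m i) :
    ((h xbar ybar : ℝ) : EReal) = phi G f h (Function.update M i (m i)) ∧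
      ((h xbar ybar : ℝ) : EReal) = ⨅ j, phi G f h (Function.update M j (m j)) := by
  -- Any point feasible for φ(zʲ) has objective at least h x̄ ȳ.
  have hA : ∀ j : Fin p, ((h xbar ybar : ℝ) : EReal) ≤
      phi G f h (Function.update M j (m j)) := by
    intro j
    apply le_sInf
    rintro c ⟨q, ⟨hqG, hqle⟩, rfl⟩
    have hqX : q.1 ∈ X := hGX q hqG
    have hW : f q.1 ∈ WMinSet (f '' X) := by
      refine ⟨⟨q.1, hqX, rfl⟩, ?_⟩
      rintro ⟨q', ⟨x', hx', rfl⟩, hlt⟩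
      have h1 : f x' j < f q.1 j := hlt j
      have h2 : f q.1 j ≤ m j := by
        have := hqle j
        simpa using this
      have h3 : m j ≤ f x' j := (hm j).2 ⟨x', hx', rfl⟩
      linarith
    simpa using EReal.coe_le_coe_iff.mpr (hopt q hqG hW)
  -- (x̄, ȳ) is feasible for φ(zⁱ).
  have hB : phi G f h (Function.update M i (m i)) ≤ ((h xbar ybar : ℝ) : EReal) := by
    apply sInf_le
    refine ⟨(xbar, ybar), ⟨hfeas, ?_⟩, rfl⟩
    intro k
    by_cases hk : k = i
    · subst hk; simp [hfi]
    · simp only [Function.update_of_ne hk]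
      exact hM xbar (hGX _ hfeas) k
  have h1 : ((h xbar ybar : ℝ) : EReal) = phi G f h (Function.update M i (m i)) :=
    le_antisymm (hA i) hB
  refine ⟨h1, le_antisymm (le_iInf hA) ((iInf_le _ i).trans hB)⟩
end

section
/- Let X ⊆ ℝⁿ be a nonempty compact set. Define Δ⁰ ∈ ℝⁿ by Δ⁰_k = min{ x_k : x ∈ X } for each k, let U = max{ Σ_{j=1}^{n} x_j : x ∈ X }, and for i = 1,…,n define Δⁱ ∈ ℝⁿ by Δⁱ_k = Δ⁰_k for k ≠ i and Δⁱ_i = U − Σ_{j≠i} Δ⁰_j. Then X is contained in the simplex conv{Δ⁰, Δ¹, …, Δⁿ}. -/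
/-!
With `D = U - ∑ j, Δ⁰ j`, the vertex `Δⁱ` is `Δ⁰ + D • eᵢ`. Every `x ∈ X` satisfies `Δ⁰ ≤ x` and
`∑ j, x j ≤ U`, so `x - Δ⁰` lies in the corner simplex `{y ≥ 0, ∑ y ≤ D}`, which is the convex hull
of `0` and the `D • eᵢ`: for `D > 0` use the weights `yᵢ / D` and `1 - ∑ yᵢ / D`, for `D = 0` the
point is `0` itself.
-/

open Set Finset
open scoped Pointwise

section

variable {𝕜 ι : Type*} [Field 𝕜] [LinearOrder 𝕜] [IsStrictOrderedRing 𝕜] [Fintype ι] [DecidableEq ι]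

theorem mem_convexHull_insert_zero_range_single {c : 𝕜} {y : ι → 𝕜} (hy : 0 ≤ y)
    (hyc : ∑ i, y i ≤ c) : y ∈ convexHull 𝕜 (insert 0 (range fun i => Pi.single i c)) := by
  have hy_sum : 0 ≤ ∑ i, y i := Finset.sum_nonneg fun i _ => hy i
  rcases (hy_sum.trans hyc).eq_or_lt with rfl | hc
  · have hy0 : y = 0 := funext fun i =>
      (Finset.sum_eq_zero_iff_of_nonneg fun j _ => hy j).1 (hyc.antisymm hy_sum) i (mem_univ i)
    exact hy0 ▸ subset_convexHull 𝕜 _ (mem_insert _ _)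
  · refine mem_convexHull_of_exists_fintype
      (fun o : Option ι => o.elim (1 - ∑ i, y i / c) (fun i => y i / c))
      (fun o => o.elim 0 fun i => Pi.single i c) ?_ ?_ ?_ ?_
    · rintro (_ | i)
      · simpa [← Finset.sum_div, div_le_one hc] using hyc
      · exact div_nonneg (hy i) hc.le
    · simp [Fintype.sum_option]
    · rintro (_ | i)
      · exact mem_insert _ _
      · exact mem_insert_of_mem _ ⟨i, rfl⟩
    · simp [Fintype.sum_option, ← Pi.single_smul', div_mul_cancel₀ _ hc.ne', Finset.univ_sum_single]

theorem mem_convexHull_insert_range_add_single {a x : ι → 𝕜} {c : 𝕜} (hax : a ≤ x)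
    (hxc : ∑ i, x i ≤ ∑ i, a i + c) :
    x ∈ convexHull 𝕜 (insert a (range fun i => a + Pi.single i c)) := by
  have hsub := mem_convexHull_insert_zero_range_single (sub_nonneg.2 hax)
    (c := c) (by simpa [Finset.sum_sub_distrib, add_comm] using hxc)
  have htranslate : insert a (range fun i => a + Pi.single i c) =
      a +ᵥ (insert 0 (range fun i => Pi.single i c) : Set (ι → 𝕜)) := by
    simp [Set.vadd_set_insert, vadd_set_range]
  rw [htranslate, convexHull_vadd]
  exact ⟨x - a, hsub, by simp⟩

end

theorem Function.update_sub_sum_erase_eq_add_single {ι G : Type*} [Fintype ι] [DecidableEq ι]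
    [AddCommGroup G] (a : ι → G) (i : ι) (u : G) :
    Function.update a i (u - ∑ j ∈ univ.erase i, a j) = a + Pi.single i (u - ∑ j, a j) := by
  rw [Pi.update_eq_sub_add_single, ← Finset.add_sum_erase _ _ (mem_univ i), sub_add_eq_add_sub,
    add_sub_assoc, ← Pi.single_sub]
  abel_nf

theorem stmt_19_general {n : ℕ} (X : Set (Fin n → ℝ))
    (Δ0 : Fin n → ℝ) (hΔ0 : ∀ k, IsLeast ((fun x => x k) '' X) (Δ0 k))
    (U : ℝ) (hU : IsGreatest ((fun x => ∑ j, x j) '' X) U) :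
    X ⊆ convexHull ℝ (insert Δ0 (Set.range fun i : Fin n =>
      Function.update Δ0 i (U - ∑ j ∈ Finset.univ.erase i, Δ0 j))) := by
  intro x hx
  have hΔ0x : Δ0 ≤ x := fun k => (hΔ0 k).2 ⟨x, hx, rfl⟩
  have hxU : ∑ j, x j ≤ U := hU.2 ⟨x, hx, rfl⟩
  simp only [Function.update_sub_sum_erase_eq_add_single]
  exact mem_convexHull_insert_range_add_single hΔ0x (by linarith)

/-- For nonempty compact `X ⊆ ℝⁿ`, with `Δ⁰_k = min{x_k : x ∈ X}`,
`U = max{Σ_j x_j : x ∈ X}` and `Δⁱ` agreeing with `Δ⁰` except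
`Δⁱ_i = U - Σ_{j ≠ i} Δ⁰_j`, the set `X` is contained in the simplex
`conv{Δ⁰, Δ¹, …, Δⁿ}`. -/
theorem stmt_19 {n : ℕ} (X : Set (Fin n → ℝ)) (hXne : X.Nonempty) (hXc : IsCompact X)
    (Δ0 : Fin n → ℝ) (hΔ0 : ∀ k, IsLeast ((fun x => x k) '' X) (Δ0 k))
    (U : ℝ) (hU : IsGreatest ((fun x => ∑ j, x j) '' X) U) :
    X ⊆ convexHull ℝ (insert Δ0 (Set.range fun i : Fin n =>
      Function.update Δ0 i (U - ∑ j ∈ Finset.univ.erase i, Δ0 j))) :=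
  stmt_19_general X Δ0 hΔ0 U hU
end
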